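/- arXiv:1711.10710 — 5 statements merged into one kernel-verified Lean document; each statement's English description precedes it below -/
import Mathlib

section
/- Greedy characterization of the optimum (Theorem 2). Assume p_x > 0 for every x ∈ {0,…,X}. Let D* be a solution of the constrained minimization problem. Then for all m ∈ {0,…,X} and n ∈ {0,…,B}, D*_{m,n} = min( (a_n − Σ_{i=0}^{m−1} p_i D*_{i,n}) / p_m , 1 − Σ_{i=n+1}^{B} D*_{m,i} ). -/
open Finset

lemma my_sum_split {N : ℕ} (m : Fin N) (f : Fin N → ℝ) :
    ∑ i, f i = (∑ i ∈ Iio m, f i) + f m + ∑ i ∈ Ioi m, f i := by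
  have h3 : (Ici m) = insert m (Ioi m) := by
    ext i; simp [Finset.mem_Ici, Finset.mem_Ioi, le_iff_lt_or_eq, or_comm, eq_comm]
  have h1 : (Iio m) ∪ (Ici m) = (univ : Finset (Fin N)) := by
    ext i; simp [Finset.mem_Iio, Finset.mem_Ici, lt_or_ge]
  have h2 : Disjoint (Iio m) (Ici m) := by
    simp [Finset.disjoint_left, Finset.mem_Iio, Finset.mem_Ici]
  rw [← h1, Finset.sum_union h2, h3, Finset.sum_insert (by simp)]
  ring

lemma my_sum_f {N : ℕ} (m x : Fin N) (pm px : ℝ) (c : Fin N → ℝ) :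
    ∑ u, c u * ((if u = m then pm else 0) - (if u = x then px else 0))
      = c m * pm - c x * px := by
  simp only [mul_sub, Finset.sum_sub_distrib, mul_ite, mul_zero]
  rw [Finset.sum_ite_eq' univ m, Finset.sum_ite_eq' univ x]
  simp


/-- A matrix `D ∈ ℝ^{(X+1)×(B+1)}` is feasible for the vector `a ∈ ℝ^{B+1}`
(with respect to the request distribution `p` and buffer level `b`) if
(i) `∑_x p x * D x n = a n` for every `n`,
(ii) each row of `D` sums to `1`,
(iii) all entries of `D` are nonnegative, and
(iv) `D x n = 0` whenever `x + n < b`. -/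
def Feasible (X B b : ℕ) (p : Fin (X+1) → ℝ) (a : Fin (B+1) → ℝ)
    (D : Fin (X+1) → Fin (B+1) → ℝ) : Prop :=
  (∀ n : Fin (B+1), ∑ x : Fin (X+1), p x * D x n = a n) ∧
  (∀ x : Fin (X+1), ∑ n : Fin (B+1), D x n = 1) ∧
  (∀ (x : Fin (X+1)) (n : Fin (B+1)), 0 ≤ D x n) ∧
  (∀ (x : Fin (X+1)) (n : Fin (B+1)), (x : ℕ) + (n : ℕ) < b → D x n = 0)

/-- The expected-energy objective
`ω(D) = η^{-b} · ∑_x ∑_n η^x p_x D_{x,n} η^n − 1`. -/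
noncomputable def objective (X B b : ℕ) (η : ℝ) (p : Fin (X+1) → ℝ)
    (D : Fin (X+1) → Fin (B+1) → ℝ) : ℝ :=
  η ^ (-(b : ℤ)) *
    (∑ x : Fin (X+1), ∑ n : Fin (B+1), η ^ (x : ℕ) * p x * D x n * η ^ (n : ℕ)) - 1

/-- `D` is a solution of the constrained minimization problem: it is feasible
for `a` and minimizes the objective among all feasible matrices. -/
def IsSolution (X B b : ℕ) (η : ℝ) (p : Fin (X+1) → ℝ) (a : Fin (B+1) → ℝ)
    (D : Fin (X+1) → Fin (B+1) → ℝ) : Prop :=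
  Feasible X B b p a D ∧
    ∀ D' : Fin (X+1) → Fin (B+1) → ℝ, Feasible X B b p a D' →
      objective X B b η p D ≤ objective X B b η p D'

set_option maxHeartbeats 1000000 in
/-- **Greedy characterization of the optimum (Theorem 2).** Assume all request
probabilities are positive. If `D` solves the constrained minimization
problem, then each entry equals
`min((a_n − ∑_{i<m} p_i D_{i,n})/p_m , 1 − ∑_{i>n} D_{m,i})`. -/
theorem greedy_characterization
    (X B b : ℕ) (hb : b ≤ B) (η : ℝ) (hη : 1 < η)
    (p : Fin (X+1) → ℝ) (hp : ∀ x, 0 < p x) (hp1 : ∑ x : Fin (X+1), p x = 1)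
    (a : Fin (B+1) → ℝ) (ha : ∀ n, 0 ≤ a n) (ha1 : ∑ n : Fin (B+1), a n = 1)
    (D : Fin (X+1) → Fin (B+1) → ℝ)
    (hD : IsSolution X B b η p a D)
    (m : Fin (X+1)) (n : Fin (B+1)) :
    D m n = min ((a n - ∑ i ∈ Finset.Iio m, p i * D i n) / p m)
      (1 - ∑ i ∈ Finset.Ioi n, D m i) := by
  obtain ⟨⟨hcol, hrow, hnng, hzero⟩, hopt⟩ := hD
  set S1 : ℝ := ∑ i ∈ Ioi m, p i * D i n with hS1def
  set S2 : ℝ := ∑ i ∈ Iio n, D m i with hS2def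
  have hS1 : 0 ≤ S1 := Finset.sum_nonneg fun i _ => mul_nonneg (hp i).le (hnng i n)
  have hS2 : 0 ≤ S2 := Finset.sum_nonneg fun i _ => hnng m i
  have hcolS : a n - ∑ i ∈ Iio m, p i * D i n = p m * D m n + S1 := by
    have h := my_sum_split m (fun i => p i * D i n)
    rw [hcol n] at h; linarith
  have hrowS : 1 - ∑ i ∈ Ioi n, D m i = S2 + D m n := by
    have h := my_sum_split n (fun i => D m i)
    rw [hrow m] at h; linarith
  have key : S1 = 0 ∨ S2 = 0 := by
    by_contra hcon
    push_neg at hcon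
    obtain ⟨h1, h2⟩ := hcon
    have hS1pos : 0 < S1 := lt_of_le_of_ne hS1 (Ne.symm h1)
    have hS2pos : 0 < S2 := lt_of_le_of_ne hS2 (Ne.symm h2)
    obtain ⟨x, hxm, hxpos⟩ : ∃ x, m < x ∧ 0 < D x n := by
      by_contra h
      push_neg at h
      have : S1 = 0 := Finset.sum_eq_zero fun i hi => by
        have h0 : D i n = 0 :=
          le_antisymm (h i (Finset.mem_Ioi.mp hi)) (hnng i n)
        rw [h0, mul_zero]
      exact h1 this
    obtain ⟨n', hn'n, hn'pos⟩ : ∃ n', n' < n ∧ 0 < D m n' := by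
      by_contra h
      push_neg at h
      have : S2 = 0 := Finset.sum_eq_zero fun i hi => by
        exact le_antisymm (h i (Finset.mem_Iio.mp hi)) (hnng m i)
      exact h2 this
    have hbm : b ≤ (m : ℕ) + (n' : ℕ) := by
      by_contra h
      exact absurd (hzero m n' (not_le.mp h)) (ne_of_gt hn'pos)
    have hbx : b ≤ (x : ℕ) + (n : ℕ) := by
      by_contra h
      exact absurd (hzero x n (not_le.mp h)) (ne_of_gt hxpos)
    have hmx : m ≠ x := ne_of_lt hxm
    have hnn' : n ≠ n' := (ne_of_lt hn'n).symm
    set ε : ℝ := min (p m * D m n') (p x * D x n) with hεdef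
    have hε : 0 < ε := lt_min (mul_pos (hp m) hn'pos) (mul_pos (hp x) hxpos)
    set f : Fin (X+1) → ℝ :=
      fun u => (if u = m then (p m)⁻¹ else 0) - (if u = x then (p x)⁻¹ else 0) with hfdef
    set g : Fin (B+1) → ℝ :=
      fun v => (if v = n then (1:ℝ) else 0) - (if v = n' then 1 else 0) with hgdef
    set D' : Fin (X+1) → Fin (B+1) → ℝ :=
      fun u v => D u v + ε * (f u * g v) with hD'def
    have hfm : f m = (p m)⁻¹ := by simp [hfdef, hmx]
    have hfx : f x = -(p x)⁻¹ := by simp [hfdef, hmx.symm]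
    have hfo : ∀ u, u ≠ m → u ≠ x → f u = 0 := by intro u h1 h2; simp [hfdef, h1, h2]
    have hgn : g n = 1 := by simp [hgdef, hnn']
    have hgn' : g n' = -1 := by simp [hgdef, hnn'.symm]
    have hgo : ∀ v, v ≠ n → v ≠ n' → g v = 0 := by intro v h1 h2; simp [hgdef, h1, h2]
    have hpf : ∑ u, p u * f u = 0 := by
      rw [hfdef, my_sum_f m x]
      rw [mul_inv_cancel₀ (hp m).ne', mul_inv_cancel₀ (hp x).ne', sub_self]
    have hgs : ∑ v, g v = 0 := by
      have := my_sum_f n n' (1:ℝ) (1:ℝ) (fun _ => (1:ℝ))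
      simpa [hgdef] using this
    have hεm : ε * (p m)⁻¹ ≤ D m n' := by
      have h : ε ≤ p m * D m n' := min_le_left _ _
      calc ε * (p m)⁻¹ ≤ (p m * D m n') * (p m)⁻¹ :=
            mul_le_mul_of_nonneg_right h (inv_nonneg.mpr (hp m).le)
        _ = D m n' := by
            rw [mul_comm (p m), mul_assoc, mul_inv_cancel₀ (hp m).ne', mul_one]
    have hεx : ε * (p x)⁻¹ ≤ D x n := by
      have h : ε ≤ p x * D x n := min_le_right _ _
      calc ε * (p x)⁻¹ ≤ (p x * D x n) * (p x)⁻¹ :=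
            mul_le_mul_of_nonneg_right h (inv_nonneg.mpr (hp x).le)
        _ = D x n := by
            rw [mul_comm (p x), mul_assoc, mul_inv_cancel₀ (hp x).ne', mul_one]
    have hfeas : Feasible X B b p a D' := by
      refine ⟨?_, ?_, ?_, ?_⟩
      · intro v
        have : ∀ u : Fin (X+1), p u * D' u v
            = p u * D u v + (ε * g v) * (p u * f u) := by
          intro u; simp only [hD'def]; ring
        rw [Finset.sum_congr rfl fun u _ => this u, Finset.sum_add_distrib,
          ← Finset.mul_sum, hpf, hcol v, mul_zero, add_zero]
      · intro u
        have : ∀ v : Fin (B+1), D' u v = D u v + (ε * f u) * g v := by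
          intro v; simp only [hD'def]; ring
        rw [Finset.sum_congr rfl fun v _ => this v, Finset.sum_add_distrib,
          ← Finset.mul_sum, hgs, hrow u, mul_zero, add_zero]
      · intro u v
        show 0 ≤ D u v + ε * (f u * g v)
        rcases eq_or_ne u m with hu | hum
        · rcases eq_or_ne v n with hv | hvn
          · rw [hu, hv, hfm, hgn]
            have h0 : 0 < ε * (p m)⁻¹ := mul_pos hε (inv_pos.mpr (hp m))
            nlinarith [hnng m n]
          · rcases eq_or_ne v n' with hv | hvn'
            · rw [hu, hv, hfm, hgn']
              nlinarith [hεm]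
            · rw [hgo v hvn hvn']; simpa using hnng u v
        · rcases eq_or_ne u x with hu | hux
          · rcases eq_or_ne v n with hv | hvn
            · rw [hu, hv, hfx, hgn]
              nlinarith [hεx]
            · rcases eq_or_ne v n' with hv | hvn'
              · rw [hu, hv, hfx, hgn']
                have h0 : 0 < ε * (p x)⁻¹ := mul_pos hε (inv_pos.mpr (hp x))
                nlinarith [hnng x n']
              · rw [hgo v hvn hvn']; simpa using hnng u v
          · rw [hfo u hum hux]; simpa using hnng u v
      · intro u v huv
        show D u v + ε * (f u * g v) = 0
        have hmn' : ((m:ℕ) < (x:ℕ)) := hxm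
        have hnn'' : ((n':ℕ) < (n:ℕ)) := hn'n
        have hfg : f u * g v = 0 := by
          rcases eq_or_ne u m with hu | hum
          · rcases eq_or_ne v n with hv | hvn
            · exfalso; rw [hu, hv] at huv; omega
            · rcases eq_or_ne v n' with hv | hvn'
              · exfalso; rw [hu, hv] at huv; omega
              · rw [hgo v hvn hvn', mul_zero]
          · rcases eq_or_ne u x with hu | hux
            · rcases eq_or_ne v n with hv | hvn
              · exfalso; rw [hu, hv] at huv; omega
              · rcases eq_or_ne v n' with hv | hvn'
                · exfalso; rw [hu, hv] at huv; omega
                · rw [hgo v hvn hvn', mul_zero]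
            · rw [hfo u hum hux, zero_mul]
        rw [hzero u v huv, hfg, mul_zero, add_zero]
    have hfη : ∑ u : Fin (X+1), (η ^ (u:ℕ) * p u) * f u = η ^ (m:ℕ) - η ^ (x:ℕ) := by
      rw [hfdef, my_sum_f m x]
      rw [mul_assoc, mul_inv_cancel₀ (hp m).ne', mul_one,
        mul_assoc, mul_inv_cancel₀ (hp x).ne', mul_one]
    have hgη : ∑ v : Fin (B+1), η ^ (v:ℕ) * g v = η ^ (n:ℕ) - η ^ (n':ℕ) := by
      have := my_sum_f n n' (1:ℝ) (1:ℝ) (fun v : Fin (B+1) => η ^ (v:ℕ))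
      simpa [hgdef] using this
    have hobj : objective X B b η p D' = objective X B b η p D
        + η ^ (-(b:ℤ)) * (ε * ((η ^ (m:ℕ) - η ^ (x:ℕ)) * (η ^ (n:ℕ) - η ^ (n':ℕ)))) := by
      have hmain : (∑ u : Fin (X+1), ∑ v : Fin (B+1),
            η ^ (u:ℕ) * p u * D' u v * η ^ (v:ℕ))
          = (∑ u : Fin (X+1), ∑ v : Fin (B+1), η ^ (u:ℕ) * p u * D u v * η ^ (v:ℕ))
            + ε * ((∑ u : Fin (X+1), (η ^ (u:ℕ) * p u) * f u)
              * (∑ v : Fin (B+1), η ^ (v:ℕ) * g v)) := by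
        rw [Finset.sum_mul_sum]
        rw [Finset.mul_sum, ← Finset.sum_add_distrib]
        refine Finset.sum_congr rfl fun u _ => ?_
        rw [Finset.mul_sum, ← Finset.sum_add_distrib]
        refine Finset.sum_congr rfl fun v _ => ?_
        simp only [hD'def]; ring
      simp only [objective, hmain, hfη, hgη]
      ring
    have hηpos : (0:ℝ) < η := lt_trans one_pos hη
    have hlt : objective X B b η p D' < objective X B b η p D := by
      rw [hobj]
      have h1 : (0:ℝ) < η ^ (-(b:ℤ)) := zpow_pos hηpos _
      have h2 : η ^ (m:ℕ) < η ^ (x:ℕ) := pow_lt_pow_right₀ hη hxm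
      have h3 : η ^ ((n':ℕ)) < η ^ (n:ℕ) := pow_lt_pow_right₀ hη hn'n
      have hneg : (η ^ (m:ℕ) - η ^ (x:ℕ)) * (η ^ (n:ℕ) - η ^ (n':ℕ)) < 0 :=
        mul_neg_of_neg_of_pos (by linarith) (by linarith)
      have hX : η ^ (-(b:ℤ)) * (ε * ((η ^ (m:ℕ) - η ^ (x:ℕ)) * (η ^ (n:ℕ) - η ^ (n':ℕ)))) < 0 :=
        mul_neg_of_pos_of_neg h1 (mul_neg_of_pos_of_neg hε hneg)
      linarith
    exact absurd (hopt D' hfeas) (not_le.mpr hlt)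
  rcases key with h | h
  · have hl : (a n - ∑ i ∈ Iio m, p i * D i n) / p m = D m n := by
      rw [hcolS, h, add_zero, mul_comm, mul_div_assoc, div_self (hp m).ne', mul_one]
    have hr : D m n ≤ 1 - ∑ i ∈ Ioi n, D m i := by rw [hrowS]; linarith
    rw [hl]
    exact (min_eq_left hr).symm
  · have hr : 1 - ∑ i ∈ Ioi n, D m i = D m n := by rw [hrowS, h, zero_add]
    have hl : D m n ≤ (a n - ∑ i ∈ Iio m, p i * D i n) / p m := by
      rw [hcolS, le_div_iff₀ (hp m)]
      nlinarith [hS1, hp m]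
    rw [hr]
    exact (min_eq_right hl).symm
end

section
/- Uniqueness of the optimal decision matrix. Assume p_x > 0 for every x ∈ {0,…,X}. If D₁ and D₂ are both solutions of the constrained minimization problem (both feasible for the same vector a and both minimizing ω among feasible matrices), then D₁ = D₂. -/
open Finset

lemma staircase_zero (X B : ℕ) (δ : Fin (X+1) → Fin (B+1) → ℝ)
    (hrow : ∀ x, ∑ n, δ x n = 0) (hcol : ∀ n, ∑ x, δ x n = 0)
    (hcross : ∀ (x x' : Fin (X+1)) (n n' : Fin (B+1)),
      x < x' → n < n' → δ x n = 0 ∨ δ x' n' = 0) :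
    ∀ x n, δ x n = 0 := by
  have key : ∀ x : Fin (X+1), (∀ y : Fin (X+1), y < x → ∀ m, δ y m = 0) →
      ∀ n, δ x n = 0 := by
    intro x ih
    -- in row x, if two columns n < m were both nonzero, column m would sum to δ x m ≠ 0
    have claim : ∀ n m : Fin (B+1), n < m → δ x n ≠ 0 → δ x m = 0 := by
      intro n m hnm hn
      by_contra hm
      have h0 : ∑ y, δ y m = δ x m := by
        apply Finset.sum_eq_single
        · intro y _ hyx
          rcases lt_or_gt_of_ne hyx with hlt | hgt
          · exact ih y hlt m
          · rcases hcross x y n m hgt hnm with h | h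
            · exact absurd h hn
            · exact h
        · intro h; exact absurd (Finset.mem_univ x) h
      rw [hcol m] at h0
      exact hm h0.symm
    intro n
    by_contra hn
    have hrest : ∀ m : Fin (B+1), m ≠ n → δ x m = 0 := by
      intro m hmn
      rcases lt_or_gt_of_ne hmn with hlt | hgt
      · by_contra hm
        exact hn (claim m n hlt hm)
      · exact claim n m hgt hn
    have h0 : ∑ m, δ x m = δ x n := by
      apply Finset.sum_eq_single
      · intro m _ hmn; exact hrest m hmn
      · intro h; exact absurd (Finset.mem_univ n) h
    rw [hrow x] at h0
    exact hn h0.symm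
  have main : ∀ k : ℕ, ∀ x : Fin (X+1), (x : ℕ) ≤ k → ∀ n, δ x n = 0 := by
    intro k
    induction k with
    | zero =>
      intro x hx
      apply key
      intro y hy
      exact absurd (lt_of_lt_of_le (Fin.lt_def.mp hy) hx) (Nat.not_lt_zero _)
    | succ k ihk =>
      intro x hx
      apply key
      intro y hy m
      exact ihk y (by have := Fin.lt_def.mp hy; omega) m
  intro x n
  exact main (x : ℕ) x le_rfl n

/-- matrix with single entry `c` at `(x0, n0)` -/
def ind {X B : ℕ} (x0 : Fin (X+1)) (n0 : Fin (B+1)) (c : ℝ) :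
    Fin (X+1) → Fin (B+1) → ℝ :=
  fun y m => if y = x0 ∧ m = n0 then c else 0

lemma ind_row {X B : ℕ} (x0 : Fin (X+1)) (n0 : Fin (B+1)) (c : ℝ) (y : Fin (X+1)) :
    ∑ m, ind x0 n0 c y m = if y = x0 then c else 0 := by
  unfold ind
  by_cases h : y = x0 <;> simp [h, Finset.sum_ite_eq']

lemma ind_col {X B : ℕ} (p : Fin (X+1) → ℝ) (x0 : Fin (X+1)) (n0 : Fin (B+1)) (c : ℝ)
    (m : Fin (B+1)) :
    ∑ y, p y * ind x0 n0 c y m = if m = n0 then p x0 * c else 0 := by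
  unfold ind
  by_cases h : m = n0 <;> simp [h, mul_ite, mul_zero, Finset.sum_ite_eq']

lemma ind_obj {X B : ℕ} (η : ℝ) (p : Fin (X+1) → ℝ) (x0 : Fin (X+1)) (n0 : Fin (B+1))
    (c : ℝ) :
    ∑ y : Fin (X+1), ∑ m : Fin (B+1), η ^ (y:ℕ) * p y * ind x0 n0 c y m * η ^ (m:ℕ)
      = η ^ (x0:ℕ) * p x0 * c * η ^ (n0:ℕ) := by
  unfold ind
  have : ∀ (y : Fin (X+1)) (m : Fin (B+1)),
      η ^ (y:ℕ) * p y * (if y = x0 ∧ m = n0 then c else 0) * η ^ (m:ℕ)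
      = if y = x0 then (if m = n0 then η ^ (y:ℕ) * p y * c * η ^ (m:ℕ) else 0) else 0 := by
    intro y m
    by_cases h1 : y = x0 <;> by_cases h2 : m = n0 <;> simp [h1, h2]
  simp only [this]
  rw [Finset.sum_eq_single x0 (fun y _ hy => by simp [hy])
    (fun h => absurd (Finset.mem_univ x0) h)]
  rw [Finset.sum_eq_single n0 (fun m _ hm => by simp [hm])
    (fun h => absurd (Finset.mem_univ n0) h)]
  simp

lemma no_cross (X B b : ℕ) (η : ℝ) (hη : 1 < η)
    (p : Fin (X+1) → ℝ) (hp : ∀ x, 0 < p x) (a : Fin (B+1) → ℝ)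
    (D : Fin (X+1) → Fin (B+1) → ℝ)
    (hsol : IsSolution X B b η p a D)
    {x x' : Fin (X+1)} {n n' : Fin (B+1)}
    (hx : x < x') (hn : n < n')
    (h1 : 0 < D x n) (h2 : 0 < D x' n') : False := by
  obtain ⟨⟨hcol, hrowD, hpos, hsupp⟩, hmin⟩ := hsol
  have hη0 : (0:ℝ) < η := lt_trans one_pos hη
  have hxx : (x:ℕ) < (x':ℕ) := Fin.lt_def.mp hx
  have hnn : (n:ℕ) < (n':ℕ) := Fin.lt_def.mp hn
  have hxne : x ≠ x' := Fin.ne_of_lt hx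
  have hnne : n ≠ n' := Fin.ne_of_lt hn
  have hxne' : x' ≠ x := hxne.symm
  have hnne' : n' ≠ n := hnne.symm
  have hε : (0:ℝ) < min (p x * D x n) (p x' * D x' n') :=
    lt_min (mul_pos (hp x) h1) (mul_pos (hp x') h2)
  generalize hεdef : min (p x * D x n) (p x' * D x' n') = ε at hε
  have hεx : ε / p x ≤ D x n := by
    rw [div_le_iff₀ (hp x)]
    rw [← hεdef]
    calc min (p x * D x n) (p x' * D x' n') ≤ p x * D x n := min_le_left _ _
    _ = D x n * p x := by ring
  have hεx' : ε / p x' ≤ D x' n' := by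
    rw [div_le_iff₀ (hp x')]
    rw [← hεdef]
    calc min (p x * D x n) (p x' * D x' n') ≤ p x' * D x' n' := min_le_right _ _
    _ = D x' n' * p x' := by ring
  have hd0 : 0 ≤ ε / p x := le_of_lt (div_pos hε (hp x))
  have hd0' : 0 ≤ ε / p x' := le_of_lt (div_pos hε (hp x'))
  have hbxn : b ≤ (x:ℕ) + (n:ℕ) := by
    by_contra h
    exact absurd (hsupp x n (by omega)) (ne_of_gt h1)
  have hbxn' : b ≤ (x':ℕ) + (n':ℕ) := by
    by_contra h
    exact absurd (hsupp x' n' (by omega)) (ne_of_gt h2)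
  set cx := ε / p x with hcx
  set cx' := ε / p x' with hcx'
  have hpcx : p x * cx = ε := mul_div_cancel₀ ε (hp x).ne'
  have hpcx' : p x' * cx' = ε := mul_div_cancel₀ ε (hp x').ne'
  set D' : Fin (X+1) → Fin (B+1) → ℝ := fun y m =>
    D y m + ind x n' cx y m + ind x' n cx' y m - ind x n cx y m - ind x' n' cx' y m
    with hD'
  have hfeas : Feasible X B b p a D' := by
    refine ⟨?_, ?_, ?_, ?_⟩
    · intro m
      have e : ∀ y : Fin (X+1), p y * D' y m
          = p y * D y m + p y * ind x n' cx y m + p y * ind x' n cx' y m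
            - p y * ind x n cx y m - p y * ind x' n' cx' y m := by
        intro y; simp only [hD']; ring
      rw [Finset.sum_congr rfl (fun y _ => e y)]
      rw [Finset.sum_sub_distrib, Finset.sum_sub_distrib,
        Finset.sum_add_distrib, Finset.sum_add_distrib]
      rw [hcol m, ind_col, ind_col, ind_col, ind_col]
      by_cases f1 : m = n <;> by_cases f2 : m = n' <;>
        simp [f1, f2, hpcx, hpcx'] <;> simp_all
    · intro y
      have e : ∀ m : Fin (B+1), D' y m
          = D y m + ind x n' cx y m + ind x' n cx' y m
            - ind x n cx y m - ind x' n' cx' y m := fun m => by simp only [hD']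
      rw [Finset.sum_congr rfl (fun m _ => e m)]
      rw [Finset.sum_sub_distrib, Finset.sum_sub_distrib,
        Finset.sum_add_distrib, Finset.sum_add_distrib]
      rw [hrowD y, ind_row, ind_row, ind_row, ind_row]
      by_cases f1 : y = x <;> by_cases f2 : y = x' <;> simp [f1, f2] <;> simp_all
    · intro y m
      simp only [hD', ind]
      by_cases e1 : y = x <;> by_cases e2 : y = x' <;>
        by_cases f1 : m = n <;> by_cases f2 : m = n' <;>
        simp only [e1, e2, f1, f2, hxne, hnne, hxne', hnne', if_pos, if_neg,
          and_true, and_false, true_and, false_and, if_true, if_false,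
          not_false_iff] <;>
        first
        | (exfalso; exact hxne (e1 ▸ e2 ▸ rfl))
        | (exfalso; exact hnne (f1 ▸ f2 ▸ rfl))
        | linarith [hpos y m, hpos x m, hpos x' m, hpos y n, hpos y n',
            hpos x n, hpos x n', hpos x' n, hpos x' n']
    · intro y m hym
      have hD0 : D y m = 0 := hsupp y m hym
      have e1 : ¬(y = x ∧ m = n) := by rintro ⟨rfl, rfl⟩; omega
      have e2 : ¬(y = x ∧ m = n') := by rintro ⟨rfl, rfl⟩; omega
      have e3 : ¬(y = x' ∧ m = n) := by rintro ⟨rfl, rfl⟩; omega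
      have e4 : ¬(y = x' ∧ m = n') := by rintro ⟨rfl, rfl⟩; omega
      simp only [hD', ind, if_neg e1, if_neg e2, if_neg e3, if_neg e4, hD0]
      ring
  have hobj : objective X B b η p D' < objective X B b η p D := by
    have key : (∑ y : Fin (X+1), ∑ m : Fin (B+1), η ^ (y:ℕ) * p y * D' y m * η ^ (m:ℕ))
        = (∑ y : Fin (X+1), ∑ m : Fin (B+1), η ^ (y:ℕ) * p y * D y m * η ^ (m:ℕ))
          - ε * ((η ^ (x':ℕ) - η ^ (x:ℕ)) * (η ^ (n':ℕ) - η ^ (n:ℕ))) := by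
      have e : ∀ (y : Fin (X+1)) (m : Fin (B+1)), η ^ (y:ℕ) * p y * D' y m * η ^ (m:ℕ)
          = η ^ (y:ℕ) * p y * D y m * η ^ (m:ℕ)
            + η ^ (y:ℕ) * p y * ind x n' cx y m * η ^ (m:ℕ)
            + η ^ (y:ℕ) * p y * ind x' n cx' y m * η ^ (m:ℕ)
            - η ^ (y:ℕ) * p y * ind x n cx y m * η ^ (m:ℕ)
            - η ^ (y:ℕ) * p y * ind x' n' cx' y m * η ^ (m:ℕ) := by
        intro y m; simp only [hD']; ring
      simp only [e, Finset.sum_sub_distrib, Finset.sum_add_distrib]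
      rw [ind_obj, ind_obj, ind_obj, ind_obj]
      have r1 : η ^ (x:ℕ) * p x * cx * η ^ (n':ℕ) = ε * (η ^ (x:ℕ) * η ^ (n':ℕ)) := by
        rw [show η ^ (x:ℕ) * p x * cx * η ^ (n':ℕ) = (p x * cx) * (η ^ (x:ℕ) * η ^ (n':ℕ)) by ring, hpcx]
      have r2 : η ^ (x':ℕ) * p x' * cx' * η ^ (n:ℕ) = ε * (η ^ (x':ℕ) * η ^ (n:ℕ)) := by
        rw [show η ^ (x':ℕ) * p x' * cx' * η ^ (n:ℕ) = (p x' * cx') * (η ^ (x':ℕ) * η ^ (n:ℕ)) by ring, hpcx']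
      have r3 : η ^ (x:ℕ) * p x * cx * η ^ (n:ℕ) = ε * (η ^ (x:ℕ) * η ^ (n:ℕ)) := by
        rw [show η ^ (x:ℕ) * p x * cx * η ^ (n:ℕ) = (p x * cx) * (η ^ (x:ℕ) * η ^ (n:ℕ)) by ring, hpcx]
      have r4 : η ^ (x':ℕ) * p x' * cx' * η ^ (n':ℕ) = ε * (η ^ (x':ℕ) * η ^ (n':ℕ)) := by
        rw [show η ^ (x':ℕ) * p x' * cx' * η ^ (n':ℕ) = (p x' * cx') * (η ^ (x':ℕ) * η ^ (n':ℕ)) by ring, hpcx']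
      rw [r1, r2, r3, r4]; ring
    have hpowx : η ^ (x:ℕ) < η ^ (x':ℕ) := pow_lt_pow_right₀ hη hxx
    have hpown : η ^ (n:ℕ) < η ^ (n':ℕ) := pow_lt_pow_right₀ hη hnn
    have hΔ : 0 < ε * ((η ^ (x':ℕ) - η ^ (x:ℕ)) * (η ^ (n':ℕ) - η ^ (n:ℕ))) :=
      mul_pos hε (mul_pos (by linarith) (by linarith))
    have hzb : (0:ℝ) < η ^ (-(b:ℤ)) := zpow_pos hη0 _
    unfold objective
    rw [key]
    have := mul_lt_mul_of_pos_left
      (show (∑ y : Fin (X+1), ∑ m : Fin (B+1), η ^ (y:ℕ) * p y * D y m * η ^ (m:ℕ))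
          - ε * ((η ^ (x':ℕ) - η ^ (x:ℕ)) * (η ^ (n':ℕ) - η ^ (n:ℕ)))
        < ∑ y : Fin (X+1), ∑ m : Fin (B+1), η ^ (y:ℕ) * p y * D y m * η ^ (m:ℕ)
        by linarith) hzb
    linarith
  have := hmin D' hfeas
  linarith

lemma objective_avg (X B b : ℕ) (η : ℝ) (p : Fin (X+1) → ℝ)
    (D₁ D₂ : Fin (X+1) → Fin (B+1) → ℝ) :
    objective X B b η p (fun x n => (D₁ x n + D₂ x n) / 2)
      = (objective X B b η p D₁ + objective X B b η p D₂) / 2 := by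
  unfold objective
  have e : ∀ (x : Fin (X+1)) (n : Fin (B+1)),
      η ^ (x:ℕ) * p x * ((D₁ x n + D₂ x n) / 2) * η ^ (n:ℕ)
      = (η ^ (x:ℕ) * p x * D₁ x n * η ^ (n:ℕ)
          + η ^ (x:ℕ) * p x * D₂ x n * η ^ (n:ℕ)) / 2 := by
    intro x n; ring
  simp only [e, ← Finset.sum_div, Finset.sum_add_distrib]
  ring


/-- **Uniqueness of the optimal decision matrix.** Assume all request
probabilities are positive. Any two solutions of the constrained minimization
problem coincide. -/
theorem solution_unique
    (X B b : ℕ) (hb : b ≤ B) (η : ℝ) (hη : 1 < η)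
    (p : Fin (X+1) → ℝ) (hp : ∀ x, 0 < p x) (hp1 : ∑ x : Fin (X+1), p x = 1)
    (a : Fin (B+1) → ℝ) (ha : ∀ n, 0 ≤ a n) (ha1 : ∑ n : Fin (B+1), a n = 1)
    (D₁ D₂ : Fin (X+1) → Fin (B+1) → ℝ)
    (hD₁ : IsSolution X B b η p a D₁)
    (hD₂ : IsSolution X B b η p a D₂) :
    D₁ = D₂ := by
  obtain ⟨⟨hcol₁, hrow₁, hpos₁, hsupp₁⟩, hmin₁⟩ := hD₁
  obtain ⟨⟨hcol₂, hrow₂, hpos₂, hsupp₂⟩, hmin₂⟩ := hD₂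
  -- the midpoint is also a solution
  set D₀ : Fin (X+1) → Fin (B+1) → ℝ := fun x n => (D₁ x n + D₂ x n) / 2 with hD₀
  have hfeas₀ : Feasible X B b p a D₀ := by
    refine ⟨?_, ?_, ?_, ?_⟩
    · intro n
      have e : ∀ x : Fin (X+1), p x * D₀ x n = (p x * D₁ x n + p x * D₂ x n) / 2 := by
        intro x; simp only [hD₀]; ring
      simp only [e, ← Finset.sum_div, Finset.sum_add_distrib, hcol₁ n, hcol₂ n]
      ring
    · intro x
      simp only [hD₀, ← Finset.sum_div, Finset.sum_add_distrib, hrow₁ x, hrow₂ x]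
      norm_num
    · intro x n
      have := hpos₁ x n; have := hpos₂ x n
      simp only [hD₀]; linarith
    · intro x n hxn
      simp only [hD₀, hsupp₁ x n hxn, hsupp₂ x n hxn]; norm_num
  have hopt : objective X B b η p D₀ = objective X B b η p D₁ := by
    have h12 : objective X B b η p D₁ = objective X B b η p D₂ :=
      le_antisymm (hmin₁ D₂ ⟨hcol₂, hrow₂, hpos₂, hsupp₂⟩)
        (hmin₂ D₁ ⟨hcol₁, hrow₁, hpos₁, hsupp₁⟩)
    rw [hD₀, objective_avg, ← h12]; ring
  have hsol₀ : IsSolution X B b η p a D₀ := by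
    refine ⟨hfeas₀, fun D' hD' => ?_⟩
    rw [hopt]; exact hmin₁ D' hD'
  -- union of supports has no strict crossing
  have hcross0 : ∀ (x x' : Fin (X+1)) (n n' : Fin (B+1)),
      x < x' → n < n' → D₀ x n = 0 ∨ D₀ x' n' = 0 := by
    intro x x' n n' hx hn
    by_contra h
    push_neg at h
    obtain ⟨h1, h2⟩ := h
    have hpos0 : ∀ y m, 0 ≤ D₀ y m := hfeas₀.2.2.1
    exact no_cross X B b η hη p hp a D₀ hsol₀ hx hn
      (lt_of_le_of_ne (hpos0 x n) (Ne.symm h1))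
      (lt_of_le_of_ne (hpos0 x' n') (Ne.symm h2))
  -- the difference of the two weighted solutions
  set δ : Fin (X+1) → Fin (B+1) → ℝ :=
    fun x n => p x * D₁ x n - p x * D₂ x n with hδ
  have hδ0 : ∀ x n, δ x n = 0 := by
    apply staircase_zero
    · intro x
      simp only [hδ, Finset.sum_sub_distrib, ← Finset.mul_sum, hrow₁ x, hrow₂ x]
      ring
    · intro n
      simp only [hδ, Finset.sum_sub_distrib, hcol₁ n, hcol₂ n]
      ring
    · intro x x' n n' hx hn
      rcases hcross0 x x' n n' hx hn with h | h
      · left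
        have e1 : D₁ x n = 0 ∧ D₂ x n = 0 := by
          have := hpos₁ x n; have := hpos₂ x n
          constructor <;> (simp only [hD₀] at h; linarith)
        simp [hδ, e1.1, e1.2]
      · right
        have e1 : D₁ x' n' = 0 ∧ D₂ x' n' = 0 := by
          have := hpos₁ x' n'; have := hpos₂ x' n'
          constructor <;> (simp only [hD₀] at h; linarith)
        simp [hδ, e1.1, e1.2]
  funext x n
  have := hδ0 x n
  simp only [hδ] at this
  have hpx := (hp x).ne'
  have : p x * (D₁ x n - D₂ x n) = 0 := by linarith
  rcases mul_eq_zero.mp this with h | h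
  · exact absurd h hpx
  · linarith
end

section
/- Dichotomy lemma (key step in the proof of Theorem 2). Assume p_x > 0 for every x ∈ {0,…,X}. Let D* be a solution of the constrained minimization problem. Then for all m ∈ {0,…,X} and n ∈ {0,…,B}, at least one of the following two equalities holds: Σ_{i=0}^{m} p_i D*_{i,n} = a_n, or Σ_{i=n}^{B} D*_{m,i} = 1. -/
open Finset

/-! If neither equality holds, row `m` has mass in some column `j < n` and column `n` has mass
in some row `x > m`. Moving mass from the cells `(m, j)` and `(x, n)` to `(m, n)` and `(x, j)`,
scaled by `1 / p` in each row so that the column constraints still hold, keeps the matrix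
feasible and changes the objective by `η^{-b} s (η^m - η^x) (η^n - η^j) < 0`, where `s` is the
amount of `p`-weighted mass moved. This contradicts optimality. -/

lemma exists_notMem_pos_of_sum_ne_sum_univ {ι M : Type*} [Fintype ι] [AddCommMonoid M]
    [LinearOrder M] {f : ι → M} (hf : ∀ i, 0 ≤ f i) {s : Finset ι}
    (h : ∑ i ∈ s, f i ≠ ∑ i, f i) : ∃ i ∉ s, 0 < f i := by
  by_contra! hle
  exact h (sum_subset (subset_univ s) fun i _ hi => le_antisymm (hle i hi) (hf i))

section Exchange

variable {ι κ : Type*} [DecidableEq ι] [DecidableEq κ]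

lemma eq_or_eq_of_single_sub_single_apply_ne_zero {m x i : ι} {α β : ℝ}
    (h : (Pi.single m α - Pi.single x β : ι → ℝ) i ≠ 0) : i = m ∨ i = x := by
  by_contra! hi
  exact h (by simp [hi.1, hi.2])

lemma sum_mul_single_sub_single [Fintype ι] (f : ι → ℝ) (m x : ι) (α β : ℝ) :
    ∑ i, f i * (Pi.single m α - Pi.single x β : ι → ℝ) i = f m * α - f x * β := by
  simp [mul_sub, sum_sub_distrib, Pi.single_apply]

lemma add_exchange_nonneg {D : ι → κ → ℝ} (hD : ∀ i k, 0 ≤ D i k) {m x : ι} {j n : κ}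
    (hmx : m ≠ x) (hjn : j ≠ n) {α β : ℝ} (hα : α ≤ D m j) (hβ : β ≤ D x n)
    (hα₀ : 0 ≤ α) (hβ₀ : 0 ≤ β) (i : ι) (k : κ) :
    0 ≤ D i k + (Pi.single m α - Pi.single x β : ι → ℝ) i *
      (Pi.single n 1 - Pi.single j 1 : κ → ℝ) k := by
  have hDik := hD i k
  simp only [Pi.sub_apply, Pi.single_apply]
  split_ifs <;> grind

end Exchange

section Perturbation

variable {X B b : ℕ} {η : ℝ} {p : Fin (X+1) → ℝ} {a : Fin (B+1) → ℝ}

lemma objective_add_mul (D : Fin (X+1) → Fin (B+1) → ℝ) (u : Fin (X+1) → ℝ)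
    (v : Fin (B+1) → ℝ) :
    objective X B b η p (fun i k => D i k + u i * v k) =
      objective X B b η p D + η ^ (-(b : ℤ)) *
        ((∑ i : Fin (X+1), η ^ (i : ℕ) * p i * u i) * ∑ k : Fin (B+1), η ^ (k : ℕ) * v k) := by
  have hsplit : ∀ (i : Fin (X+1)) (k : Fin (B+1)),
      η ^ (i : ℕ) * p i * (D i k + u i * v k) * η ^ (k : ℕ) =
        η ^ (i : ℕ) * p i * D i k * η ^ (k : ℕ) + η ^ (i : ℕ) * p i * u i * (η ^ (k : ℕ) * v k) :=
    fun _ _ => by ring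
  simp only [objective, hsplit, sum_add_distrib, sum_mul_sum]
  ring

lemma Feasible.add_mul {D : Fin (X+1) → Fin (B+1) → ℝ} (hD : Feasible X B b p a D)
    {u : Fin (X+1) → ℝ} {v : Fin (B+1) → ℝ} (hu : ∑ i, p i * u i = 0) (hv : ∑ k, v k = 0)
    (hnn : ∀ i k, 0 ≤ D i k + u i * v k)
    (hsupp : ∀ (i : Fin (X+1)) (k : Fin (B+1)), (i : ℕ) + (k : ℕ) < b → u i * v k = 0) :
    Feasible X B b p a (fun i k => D i k + u i * v k) := by
  obtain ⟨hcol, hrow, -, hzero⟩ := hD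
  refine ⟨fun k => ?_, fun i => ?_, hnn, fun i k hik => by simp [hzero i k hik, hsupp i k hik]⟩
  · simp only [mul_add, sum_add_distrib, ← mul_assoc, ← sum_mul, hu, hcol k, zero_mul, add_zero]
  · simp only [sum_add_distrib, ← mul_sum, hv, hrow i, mul_zero, add_zero]

noncomputable def exchange (p : Fin (X+1) → ℝ) (D : Fin (X+1) → Fin (B+1) → ℝ) (m x : Fin (X+1))
    (j n : Fin (B+1)) (s : ℝ) : Fin (X+1) → Fin (B+1) → ℝ :=
  fun i k => D i k + (Pi.single m (s / p m) - Pi.single x (s / p x) : Fin (X+1) → ℝ) i *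
    (Pi.single n 1 - Pi.single j 1 : Fin (B+1) → ℝ) k

variable {D : Fin (X+1) → Fin (B+1) → ℝ} {m x : Fin (X+1)} {j n : Fin (B+1)} {s : ℝ}

lemma Feasible.exchange (hD : Feasible X B b p a D) (hp : ∀ x, 0 < p x) (hmx : m < x)
    (hjn : j < n) (hs : 0 ≤ s) (hsm : s ≤ p m * D m j) (hsx : s ≤ p x * D x n)
    (hmjb : b ≤ (m : ℕ) + (j : ℕ)) : Feasible X B b p a (exchange p D m x j n s) := by
  refine hD.add_mul ?_ (by simp [sum_sub_distrib]) ?_ fun i k hik => ?_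
  · rw [sum_mul_single_sub_single, mul_div_cancel₀ _ (hp m).ne', mul_div_cancel₀ _ (hp x).ne',
      sub_self]
  · exact add_exchange_nonneg hD.2.2.1 hmx.ne hjn.ne
      (div_le_of_le_mul₀ (hp m).le (hD.2.2.1 m j) (by rwa [mul_comm]))
      (div_le_of_le_mul₀ (hp x).le (hD.2.2.1 x n) (by rwa [mul_comm]))
      (div_nonneg hs (hp m).le) (div_nonneg hs (hp x).le)
  · by_contra h
    rcases eq_or_eq_of_single_sub_single_apply_ne_zero (left_ne_zero_of_mul h) with rfl | rfl <;>
      rcases eq_or_eq_of_single_sub_single_apply_ne_zero (right_ne_zero_of_mul h) with rfl | rfl <;>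
      grind

lemma objective_exchange (hpm : p m ≠ 0) (hpx : p x ≠ 0) :
    objective X B b η p (exchange p D m x j n s) = objective X B b η p D +
      η ^ (-(b : ℤ)) * (s * (η ^ (m : ℕ) - η ^ (x : ℕ)) * (η ^ (n : ℕ) - η ^ (j : ℕ))) := by
  unfold exchange
  rw [objective_add_mul, sum_mul_single_sub_single, sum_mul_single_sub_single]
  field_simp

end Perturbation

lemma IsSolution.eq_zero_or_eq_zero {X B b : ℕ} {η : ℝ} (hη : 1 < η) {p : Fin (X+1) → ℝ}
    (hp : ∀ x, 0 < p x) {a : Fin (B+1) → ℝ} {D : Fin (X+1) → Fin (B+1) → ℝ}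
    (hD : IsSolution X B b η p a D) {m x : Fin (X+1)} {j n : Fin (B+1)} (hmx : m < x)
    (hjn : j < n) : D m j = 0 ∨ D x n = 0 := by
  obtain ⟨hfeas, hmin⟩ := hD
  by_contra! hne
  have hmj : 0 < D m j := (hfeas.2.2.1 m j).lt_of_ne' hne.1
  have hxn : 0 < D x n := (hfeas.2.2.1 x n).lt_of_ne' hne.2
  have hmjb : b ≤ (m : ℕ) + (j : ℕ) := not_lt.mp fun h => hne.1 (hfeas.2.2.2 m j h)
  set s := min (p m * D m j) (p x * D x n)
  have hs : 0 < s := lt_min (mul_pos (hp m) hmj) (mul_pos (hp x) hxn)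
  have hle := hmin _ (hfeas.exchange hp hmx hjn hs.le (min_le_left _ _) (min_le_right _ _) hmjb)
  rw [objective_exchange (hp m).ne' (hp x).ne'] at hle
  have hdecrease : η ^ (-(b : ℤ)) * (s * (η ^ (m : ℕ) - η ^ (x : ℕ)) *
      (η ^ (n : ℕ) - η ^ (j : ℕ))) < 0 :=
    mul_neg_of_pos_of_neg (by positivity) <| mul_neg_of_neg_of_pos
      (mul_neg_of_pos_of_neg hs (sub_neg.mpr (pow_lt_pow_right₀ hη hmx)))
      (sub_pos.mpr (pow_lt_pow_right₀ hη hjn))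
  linarith

theorem dichotomy_general
    (X B b : ℕ) (η : ℝ) (hη : 1 < η)
    (p : Fin (X+1) → ℝ) (hp : ∀ x, 0 < p x)
    (a : Fin (B+1) → ℝ)
    (D : Fin (X+1) → Fin (B+1) → ℝ)
    (hD : IsSolution X B b η p a D)
    (m : Fin (X+1)) (n : Fin (B+1)) :
    (∑ i ∈ Finset.Iic m, p i * D i n = a n) ∨
    (∑ i ∈ Finset.Ici n, D m i = 1) := by
  obtain ⟨hcol, hrow, hnn, -⟩ := hD.1
  by_contra! h
  obtain ⟨x, hx, hxn⟩ := exists_notMem_pos_of_sum_ne_sum_univ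
    (fun i => mul_nonneg (hp i).le (hnn i n)) (h.1.trans_eq (hcol n).symm)
  obtain ⟨j, hj, hmj⟩ := exists_notMem_pos_of_sum_ne_sum_univ
    (hnn m) (h.2.trans_eq (hrow m).symm)
  rw [mem_Iic, not_le] at hx
  rw [mem_Ici, not_le] at hj
  rcases hD.eq_zero_or_eq_zero hη hp hx hj with h0 | h0
  · exact hmj.ne' h0
  · simp [h0] at hxn

/-- **Dichotomy lemma.** Assume all request probabilities are positive. If `D`
solves the constrained minimization problem, then for all `m, n` either the
partial column sum `∑_{i=0}^m p_i D_{i,n}` saturates `a_n`, or the tail row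
sum `∑_{i=n}^B D_{m,i}` saturates `1`. -/
theorem dichotomy
    (X B b : ℕ) (hb : b ≤ B) (η : ℝ) (hη : 1 < η)
    (p : Fin (X+1) → ℝ) (hp : ∀ x, 0 < p x) (hp1 : ∑ x : Fin (X+1), p x = 1)
    (a : Fin (B+1) → ℝ) (ha : ∀ n, 0 ≤ a n) (ha1 : ∑ n : Fin (B+1), a n = 1)
    (D : Fin (X+1) → Fin (B+1) → ℝ)
    (hD : IsSolution X B b η p a D)
    (m : Fin (X+1)) (n : Fin (B+1)) :
    (∑ i ∈ Finset.Iic m, p i * D i n = a n) ∨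
    (∑ i ∈ Finset.Ici n, D m i = 1) :=
  dichotomy_general X B b η hη p hp a D hD m n
end

section
/- Strict improvement of the exchange perturbation (step in the proof of Theorem 1). Let D be feasible for a, with indices x⁻ < x⁺ in {0,…,X} and n⁻ < n⁺ in {0,…,B}, and let δ > 0. Define D′ to agree with D except at the four entries: D′_{x⁻,n⁻} = D_{x⁻,n⁻} − p_{x⁺}δ, D′_{x⁻,n⁺} = D_{x⁻,n⁺} + p_{x⁺}δ, D′_{x⁺,n⁺} = D_{x⁺,n⁺} − p_{x⁻}δ, D′_{x⁺,n⁻} = D_{x⁺,n⁻} + p_{x⁻}δ. Then ω(D) − ω(D′) = δ · η^{−b + x⁻ + n⁻} · p_{x⁺} p_{x⁻} · (η^{x⁺ − x⁻} − 1)(η^{n⁺ − n⁻} − 1); in particular, if p_{x⁻} > 0 and p_{x⁺} > 0 then ω(D′) < ω(D). -/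
open Finset

lemma sum_pair_of_eq_zero {m : ℕ} (g : Fin m → ℝ) (i j : Fin m) (hij : i ≠ j)
    (h0 : ∀ k, k ≠ i → k ≠ j → g k = 0) : ∑ k, g k = g i + g j := by
  have hsub : ({i, j} : Finset (Fin m)) ⊆ Finset.univ := Finset.subset_univ _
  have := Finset.sum_subset hsub (fun k _ hk => by
    simp only [Finset.mem_insert, Finset.mem_singleton, not_or] at hk
    exact h0 k hk.1 hk.2)
  rw [Finset.sum_pair hij] at this
  exact this.symm

/-- **Strict improvement of the exchange perturbation** (step in the proof of
Theorem 1). The exchange perturbation decreases the objective by exactly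
`δ · η^{-b+x⁻+n⁻} · p_{x⁺} p_{x⁻} · (η^{x⁺−x⁻}−1)(η^{n⁺−n⁻}−1)`; in
particular it strictly decreases the objective when `p_{x⁻}, p_{x⁺} > 0`. -/
theorem exchange_strict_improvement
    (X B b : ℕ) (hb : b ≤ B) (η : ℝ) (hη : 1 < η)
    (p : Fin (X+1) → ℝ) (hp : ∀ x, 0 ≤ p x) (hp1 : ∑ x : Fin (X+1), p x = 1)
    (a : Fin (B+1) → ℝ) (ha : ∀ n, 0 ≤ a n) (ha1 : ∑ n : Fin (B+1), a n = 1)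
    (D : Fin (X+1) → Fin (B+1) → ℝ) (hD : Feasible X B b p a D)
    (xm xp : Fin (X+1)) (nm np : Fin (B+1)) (hx : xm < xp) (hn : nm < np)
    (δ : ℝ) (hδ : 0 < δ)
    (D' : Fin (X+1) → Fin (B+1) → ℝ)
    (hD' : ∀ x n, D' x n =
      if x = xm ∧ n = nm then D xm nm - p xp * δ
      else if x = xm ∧ n = np then D xm np + p xp * δ
      else if x = xp ∧ n = np then D xp np - p xm * δ
      else if x = xp ∧ n = nm then D xp nm + p xm * δ
      else D x n) :
    objective X B b η p D - objective X B b η p D' =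
      δ * η ^ (-(b : ℤ) + (xm : ℕ) + (nm : ℕ)) * p xp * p xm *
        ((η ^ ((xp : ℕ) - (xm : ℕ)) - 1) * (η ^ ((np : ℕ) - (nm : ℕ)) - 1)) ∧
    (0 < p xm → 0 < p xp →
      objective X B b η p D' < objective X B b η p D) := by
  have hη0 : (0:ℝ) < η := lt_trans one_pos hη
  have hne : η ≠ 0 := ne_of_gt hη0
  have hxlt : (xm:ℕ) < (xp:ℕ) := hx
  have hnlt : (nm:ℕ) < (np:ℕ) := hn
  have hxne : xm ≠ xp := ne_of_lt hx
  have hnne : nm ≠ np := ne_of_lt hn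
  set F : Fin (X+1) → Fin (B+1) → ℝ :=
    fun x n => η ^ (x:ℕ) * p x * (D x n - D' x n) * η ^ (n:ℕ) with hF
  -- values of D - D'
  have e1 : D xm nm - D' xm nm = p xp * δ := by rw [hD' xm nm]; simp
  have e2 : D xm np - D' xm np = -(p xp * δ) := by
    rw [hD' xm np]; simp [hnne.symm]
  have e3 : D xp np - D' xp np = p xm * δ := by
    rw [hD' xp np]; simp [hxne.symm]
  have e4 : D xp nm - D' xp nm = -(p xm * δ) := by
    rw [hD' xp nm]; simp [hxne.symm, hnne]
  have ezero : ∀ x n, x ≠ xm → x ≠ xp → D x n - D' x n = 0 := by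
    intro x n h1 h2; rw [hD' x n]; simp [h1, h2]
  have ezero' : ∀ x n, n ≠ nm → n ≠ np → D x n - D' x n = 0 := by
    intro x n h1 h2; rw [hD' x n]; simp [h1, h2]
  -- the inner sums
  have hin1 : ∑ n, F xm n = F xm nm + F xm np :=
    sum_pair_of_eq_zero _ nm np hnne (fun k h1 h2 => by
      simp only [hF]; rw [ezero' xm k h1 h2]; ring)
  have hin2 : ∑ n, F xp n = F xp nm + F xp np :=
    sum_pair_of_eq_zero _ nm np hnne (fun k h1 h2 => by
      simp only [hF]; rw [ezero' xp k h1 h2]; ring)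
  have hout : ∑ x, ∑ n, F x n = (∑ n, F xm n) + (∑ n, F xp n) :=
    sum_pair_of_eq_zero _ xm xp hxne (fun k h1 h2 => by
      apply Finset.sum_eq_zero; intro n _
      simp only [hF]; rw [ezero k n h1 h2]; ring)
  have hdiff : objective X B b η p D - objective X B b η p D' =
      η ^ (-(b:ℤ)) * (∑ x, ∑ n, F x n) := by
    have hSS : (∑ x : Fin (X+1), ∑ n : Fin (B+1), η ^ (x:ℕ) * p x * D x n * η ^ (n:ℕ))
        - (∑ x : Fin (X+1), ∑ n : Fin (B+1), η ^ (x:ℕ) * p x * D' x n * η ^ (n:ℕ))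
        = ∑ x : Fin (X+1), ∑ n : Fin (B+1), F x n := by
      rw [← Finset.sum_sub_distrib]
      refine Finset.sum_congr rfl (fun x _ => ?_)
      rw [← Finset.sum_sub_distrib]
      exact Finset.sum_congr rfl (fun n _ => by simp only [hF]; ring)
    simp only [objective]
    rw [← hSS]; ring
  have hzadd : η ^ (-(b : ℤ) + (xm : ℕ) + (nm : ℕ)) =
      η ^ (-(b:ℤ)) * η ^ (xm:ℕ) * η ^ (nm:ℕ) := by
    rw [zpow_add₀ hne, zpow_add₀ hne, zpow_natCast, zpow_natCast]
  have hxp : η ^ (xp:ℕ) = η ^ ((xp:ℕ) - (xm:ℕ)) * η ^ (xm:ℕ) := by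
    rw [← pow_add]; congr 1; omega
  have hnp : η ^ (np:ℕ) = η ^ ((np:ℕ) - (nm:ℕ)) * η ^ (nm:ℕ) := by
    rw [← pow_add]; congr 1; omega
  have key : objective X B b η p D - objective X B b η p D' =
      δ * η ^ (-(b : ℤ) + (xm : ℕ) + (nm : ℕ)) * p xp * p xm *
        ((η ^ ((xp : ℕ) - (xm : ℕ)) - 1) * (η ^ ((np : ℕ) - (nm : ℕ)) - 1)) := by
    rw [hdiff, hout, hin1, hin2, hzadd]
    simp only [hF]
    rw [e1, e2, e3, e4, hxp, hnp]
    ring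
  refine ⟨key, fun hpm hpp => ?_⟩
  have hzpos : (0:ℝ) < η ^ (-(b : ℤ) + (xm : ℕ) + (nm : ℕ)) := zpow_pos hη0 _
  have h1 : (0:ℝ) < η ^ ((xp:ℕ) - (xm:ℕ)) - 1 := by
    have := one_lt_pow₀ hη (by omega : (xp:ℕ) - (xm:ℕ) ≠ 0); linarith
  have h2 : (0:ℝ) < η ^ ((np:ℕ) - (nm:ℕ)) - 1 := by
    have := one_lt_pow₀ hη (by omega : (np:ℕ) - (nm:ℕ) ≠ 0); linarith
  have : 0 < δ * η ^ (-(b : ℤ) + (xm : ℕ) + (nm : ℕ)) * p xp * p xm *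
      ((η ^ ((xp : ℕ) - (xm : ℕ)) - 1) * (η ^ ((np : ℕ) - (nm : ℕ)) - 1)) := by
    positivity
  linarith [key]
end

section
/- Necessity of constraint (13.d). Suppose a ∈ ℝ^{B+1} admits at least one feasible matrix D. Then for every m ∈ {0,…,B} with m ≤ b, one has a_m ≤ Σ_{x = b − m}^{X} p_x (assuming b − m ≤ X; if b − m > X then a_m = 0). -/
open Finset

/-- **Necessity of constraint (13.d).** If `a` admits a feasible matrix, then
for every `m ≤ b` one has `a_m ≤ ∑_{x = b−m}^{X} p_x` (and `a_m = 0` when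
`b − m > X`). -/
theorem constraint_13d_necessary
    (X B b : ℕ) (hb : b ≤ B) (η : ℝ) (hη : 1 < η)
    (p : Fin (X+1) → ℝ) (hp : ∀ x, 0 ≤ p x) (hp1 : ∑ x : Fin (X+1), p x = 1)
    (a : Fin (B+1) → ℝ)
    (hfeas : ∃ D, Feasible X B b p a D)
    (m : Fin (B+1)) (hm : (m : ℕ) ≤ b) :
    (b - (m : ℕ) ≤ X →
      a m ≤ ∑ x ∈ Finset.univ.filter (fun x : Fin (X+1) => b - (m : ℕ) ≤ (x : ℕ)), p x) ∧
    (X < b - (m : ℕ) → a m = 0) := by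
  obtain ⟨D, hsum, hrow, hnn, hzero⟩ := hfeas
  have ha : a m = ∑ x ∈ Finset.univ.filter (fun x : Fin (X+1) => b - (m : ℕ) ≤ (x : ℕ)),
      p x * D x m := by
    rw [← hsum m]
    symm
    apply Finset.sum_filter_of_ne
    intro x _ hne
    by_contra h
    push_neg at h
    exact hne (by rw [hzero x m (by omega)]; ring)
  constructor
  · intro _
    rw [ha]
    apply Finset.sum_le_sum
    intro x _
    have hD1 : D x m ≤ 1 := by
      rw [← hrow x]
      exact Finset.single_le_sum (fun n _ => hnn x n) (Finset.mem_univ m)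
    calc p x * D x m ≤ p x * 1 := mul_le_mul_of_nonneg_left hD1 (hp x)
      _ = p x := mul_one _
  · intro hX
    rw [ha]
    apply Finset.sum_eq_zero
    intro x hx
    simp only [Finset.mem_filter] at hx
    have : (x : ℕ) ≤ X := Nat.lt_succ_iff.mp x.isLt
    omega
end
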